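/- The uniform matroid U_{2,4} cannot be the uniform rate region of any 4-user binary-input MAC: there is no 4-user BMAC P such that, with mutually independent uniform binary inputs X[1], X[2], X[3], X[4] and output Y, one has I(X[i], X[j]; Y) = 0 and I(X[i], X[j]; Y, X[k], X[l]) = 2 for all choices of distinct i, j, k, l in {1, 2, 3, 4}. -/

import Mathlib

/-!
Fix an output `y` of positive probability and let `S` be the set of inputs `x` with
`W x y > 0`. As `I(X[0], X[1]; Y) = 0`, the pair `(X[0], X[1])` is independent of `Y`, so all
four of its values occur in `S`. As `I(X[i], X[j]; Y, X[k], X[l]) = 2 = H(X[i], X[j])`, the pair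
`(X[i], X[j])` is a function of `(Y, X[k], X[l])` on the support, so two words of `S` that agree
in two coordinates coincide: `S` is a binary code of length 4 and minimum distance 3 with at least
three words. But each coordinate contributes at most 2 to the sum of the three pairwise
distances of three binary words, so that sum is at most 8 < 9.
-/

/-- Binary (base 2) Shannon entropy of a finitely supported distribution. -/
noncomputable def H2 {Ω : Type*} [Fintype Ω] (p : Ω → ℝ) : ℝ :=
  -∑ ω, p ω * Real.logb 2 (p ω)

open scoped Classical in
/-- Marginal distribution of the push-forward of `p` under `f`. -/
noncomputable def marg {Ω A : Type*} [Fintype Ω] (p : Ω → ℝ) (f : Ω → A) (a : A) : ℝ :=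
  ∑ ω, if f ω = a then p ω else 0

/-- Mutual information (in bits) between `f` and `g` under the joint distribution `p`. -/
noncomputable def mi {Ω A B : Type*} [Fintype Ω] [Fintype A] [Fintype B]
    (p : Ω → ℝ) (f : Ω → A) (g : Ω → B) : ℝ :=
  H2 (marg p f) + H2 (marg p g) - H2 (marg p fun ω => (f ω, g ω))

/-- `W` is a bona fide transition probability kernel (channel), `W x y = P(y | x)`. -/
def IsChannel {α Y : Type*} [Fintype Y] (W : α → Y → ℝ) : Prop :=
  (∀ x y, 0 ≤ W x y) ∧ ∀ x, ∑ y, W x y = 1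

/-- Joint distribution of (input, output) of an `m`-user BMAC with i.i.d. uniform binary
inputs. -/
noncomputable def inputJoint {m : ℕ} {Y : Type*} (W : (Fin m → ZMod 2) → Y → ℝ) :
    (Fin m → ZMod 2) × Y → ℝ :=
  fun q => W q.1 q.2 / 2 ^ m

/-- `I[J](P) = I(X[J]; Y, X[Jᶜ])` for the BMAC `W` with i.i.d. uniform binary inputs. -/
noncomputable def condMI {m : ℕ} {Y : Type*} [Fintype Y] (W : (Fin m → ZMod 2) → Y → ℝ)
    (J : Finset (Fin m)) : ℝ :=
  mi (inputJoint W) (fun q => fun i : {i // i ∈ J} => q.1 i.1)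
    (fun q => (q.2, fun i : {i // i ∈ Jᶜ} => q.1 i.1))

/-- `I(X[J]; Y)` for the BMAC `W` with i.i.d. uniform binary inputs. -/
noncomputable def miY {m : ℕ} {Y : Type*} [Fintype Y] (W : (Fin m → ZMod 2) → Y → ℝ)
    (J : Finset (Fin m)) : ℝ :=
  mi (inputJoint W) (fun q => fun i : {i // i ∈ J} => q.1 i.1) (fun q => q.2)


open Finset Real InformationTheory

section Marginal

variable {Ω A B : Type*} [Fintype Ω] {p : Ω → ℝ}

lemma marg_nonneg (hp : ∀ ω, 0 ≤ p ω) (f : Ω → A) (a : A) : 0 ≤ marg p f a :=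
  sum_nonneg fun ω _ => by split_ifs <;> simp [hp ω]

lemma sum_marg_mul [Fintype A] (p : Ω → ℝ) (f : Ω → A) (φ : A → ℝ) :
    ∑ a, marg p f a * φ a = ∑ ω, p ω * φ (f ω) := by
  classical
  simp only [marg, sum_mul, ite_mul, zero_mul]
  rw [sum_comm]
  simp

lemma sum_marg [Fintype A] (p : Ω → ℝ) (f : Ω → A) : ∑ a, marg p f a = ∑ ω, p ω := by
  simpa using sum_marg_mul p f 1

lemma le_marg_apply (hp : ∀ ω, 0 ≤ p ω) (f : Ω → A) (ω : Ω) : p ω ≤ marg p f (f ω) := by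
  classical
  simpa [marg] using single_le_sum (f := fun ω' => if f ω' = f ω then p ω' else 0)
    (fun ω' _ => by split_ifs <;> simp [hp ω']) (mem_univ ω)

lemma marg_le_marg_comp (hp : ∀ ω, 0 ≤ p ω) (f : Ω → A) (k : A → B) (a : A) :
    marg p f a ≤ marg p (fun ω => k (f ω)) (k a) := by
  classical
  refine sum_le_sum fun ω _ => ?_
  split_ifs <;> simp_all

lemma exists_pos_of_marg_pos {f : Ω → A} {a : A} (h : 0 < marg p f a) :
    ∃ ω, f ω = a ∧ 0 < p ω := by
  by_contra! hne
  refine h.not_ge (sum_nonpos fun ω _ => ?_)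
  split_ifs with hω
  exacts [hne ω hω, le_rfl]

lemma marg_pair_add_marg_pair_le (hp : ∀ ω, 0 ≤ p ω) (f : Ω → A) (g : Ω → B) {a a' : A}
    (ha : a ≠ a') (b : B) :
    marg p (fun ω => (f ω, g ω)) (a, b) + marg p (fun ω => (f ω, g ω)) (a', b) ≤
      marg p g b := by
  classical
  rw [marg, marg, ← sum_add_distrib]
  refine sum_le_sum fun ω _ => ?_
  split_ifs <;> simp_all

end Marginal

lemma H2_eq_neg_sum_mul_log_div {Ω : Type*} [Fintype Ω] (p : Ω → ℝ) :
    H2 p = -(∑ ω, p ω * log (p ω)) / log 2 := by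
  simp only [H2, logb, mul_div_assoc', sum_div, neg_div]

lemma H2_eq_logb_card {A : Type*} [Fintype A] {p : A → ℝ} {c : ℝ} (hp : ∀ a, p a = c)
    (hsum : ∑ a, p a = 1) : H2 p = logb 2 (Fintype.card A) := by
  simp only [hp, sum_const, card_univ, nsmul_eq_mul] at hsum
  have hc : c = (Fintype.card A : ℝ)⁻¹ := eq_inv_of_mul_eq_one_right hsum
  simp only [H2, hp, sum_const, card_univ, nsmul_eq_mul, hc, logb_inv]
  rw [← mul_assoc, mul_inv_cancel₀ (left_ne_zero_of_mul_eq_one hsum)]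
  ring

section Gibbs

variable {ι : Type*} [Fintype ι] {q r : ι → ℝ}

lemma mul_log_sub_mul_log_add_sub_eq_mul_klFun {x y : ℝ} (hx : 0 ≤ x) (hy : 0 < y) :
    x * log x - x * log y + y - x = y * klFun (x / y) := by
  rcases hx.eq_or_lt with rfl | hx
  · simp [klFun]
  · rw [klFun_apply, log_div hx.ne' hy.ne']
    field_simp

/-- Equality case of Gibbs' inequality: each term `q log q - q log r + r - q = r klFun (q / r)`
is nonnegative, so all of them vanish. -/
theorem eq_of_sum_eq_of_sum_mul_log_eq (hq : ∀ i, 0 ≤ q i) (hr : ∀ i, 0 ≤ r i)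
    (hqr : ∀ i, 0 < q i → 0 < r i) (hsum : ∑ i, q i = ∑ i, r i)
    (hlog : ∑ i, q i * log (q i) = ∑ i, q i * log (r i)) : q = r := by
  have hq_zero : ∀ i, r i = 0 → q i = 0 := fun i hri =>
    (hq i).eq_or_lt.elim Eq.symm fun hqi => absurd hri (hqr i hqi).ne'
  set e : ι → ℝ := fun i => q i * log (q i) - q i * log (r i) + r i - q i
  have he_eq : ∀ i, 0 < r i → e i = r i * klFun (q i / r i) := fun i hri =>
    mul_log_sub_mul_log_add_sub_eq_mul_klFun (hq i) hri
  have he_nonneg : ∀ i, 0 ≤ e i := by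
    intro i
    rcases (hr i).eq_or_lt with hri | hri
    · simp [e, hq_zero i hri.symm, ← hri]
    · rw [he_eq i hri]
      exact mul_nonneg hri.le (klFun_nonneg (div_nonneg (hq i) hri.le))
  have he_sum : ∑ i, e i = 0 := by
    simp only [e, sum_sub_distrib, sum_add_distrib]
    linarith
  funext i
  have hei := (sum_eq_zero_iff_of_nonneg fun i _ => he_nonneg i).1 he_sum i (mem_univ i)
  rcases (hr i).eq_or_lt with hri | hri
  · rw [← hri, hq_zero i hri.symm]
  · rw [he_eq i hri, mul_eq_zero,
      klFun_eq_zero_iff (div_nonneg (hq i) hri.le), div_eq_one_iff_eq hri.ne'] at hei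
    exact hei.resolve_left hri.ne'

theorem eq_of_sum_mul_log_eq_of_le (hq : ∀ i, 0 ≤ q i) (hqr : ∀ i, q i ≤ r i)
    (hlog : ∑ i, q i * log (q i) = ∑ i, q i * log (r i)) {i : ι} (hi : 0 < q i) :
    q i = r i := by
  have hle : ∀ i, q i * log (q i) ≤ q i * log (r i) := by
    intro i
    rcases (hq i).eq_or_lt with hqi | hqi
    · simp [← hqi]
    · exact mul_le_mul_of_nonneg_left (log_le_log hqi (hqr i)) hqi.le
  have hi_eq := (sum_eq_sum_iff_of_le fun i _ => hle i).1 hlog i (mem_univ i)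
  exact log_injOn_pos hi (hi.trans_le (hqr i)) (mul_left_cancel₀ hi.ne' hi_eq)

end Gibbs

section MutualInformation

variable {Ω A B : Type*} [Fintype Ω] [Fintype A] [Fintype B] {p : Ω → ℝ}

lemma sum_marg_mul_comp (p : Ω → ℝ) (f : Ω → A) (k : A → B) (φ : B → ℝ) :
    ∑ a, marg p f a * φ (k a) = ∑ b, marg p (fun ω => k (f ω)) b * φ b := by
  rw [sum_marg_mul, sum_marg_mul]

theorem marg_pair_eq_mul_of_mi_eq_zero (hp : ∀ ω, 0 ≤ p ω) (hp_sum : ∑ ω, p ω = 1)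
    (f : Ω → A) (g : Ω → B) (hmi : mi p f g = 0) (a : A) (b : B) :
    marg p (fun ω => (f ω, g ω)) (a, b) = marg p f a * marg p g b := by
  set d := marg p (fun ω => (f ω, g ω))
  have hd_nonneg : ∀ v, 0 ≤ d v := marg_nonneg hp _
  have hd_fst : ∀ v, d v ≤ marg p f v.1 := fun v => marg_le_marg_comp hp _ Prod.fst v
  have hd_snd : ∀ v, d v ≤ marg p g v.2 := fun v => marg_le_marg_comp hp _ Prod.snd v
  have hsplit : ∀ v, d v * log (marg p f v.1 * marg p g v.2) =
      d v * log (marg p f v.1) + d v * log (marg p g v.2) := by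
    intro v
    rcases (hd_nonneg v).eq_or_lt with hv | hv
    · simp [← hv]
    · rw [log_mul (hv.trans_le (hd_fst v)).ne' (hv.trans_le (hd_snd v)).ne', mul_add]
  have hlog : ∑ v, d v * log (d v) = ∑ v, d v * log (marg p f v.1 * marg p g v.2) := by
    rw [sum_congr rfl fun v _ => hsplit v, sum_add_distrib,
      sum_marg_mul_comp p _ Prod.fst (fun a => log (marg p f a)),
      sum_marg_mul_comp p _ Prod.snd (fun b => log (marg p g b))]
    simp only [mi, H2_eq_neg_sum_mul_log_div] at hmi
    field_simp at hmi
    linarith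
  have hsum : ∑ v, d v = ∑ v : A × B, marg p f v.1 * marg p g v.2 := by
    rw [sum_marg, Fintype.sum_prod_type, ← sum_mul_sum, sum_marg, sum_marg, hp_sum, one_mul]
  have hd := eq_of_sum_eq_of_sum_mul_log_eq hd_nonneg
    (fun v => mul_nonneg (marg_nonneg hp _ _) (marg_nonneg hp _ _))
    (fun v hv => mul_pos (hv.trans_le (hd_fst v)) (hv.trans_le (hd_snd v))) hsum hlog
  exact congrFun hd (a, b)

theorem eq_of_mi_eq_H2 (hp : ∀ ω, 0 ≤ p ω) (f : Ω → A) (g : Ω → B)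
    (hmi : mi p f g = H2 (marg p f)) {ω ω' : Ω} (hω : 0 < p ω) (hω' : 0 < p ω')
    (hg : g ω = g ω') : f ω = f ω' := by
  set d := marg p (fun ω => (f ω, g ω))
  have hd_snd : ∀ v, d v ≤ marg p g v.2 := fun v => marg_le_marg_comp hp _ Prod.snd v
  have hlog : ∑ v, d v * log (d v) = ∑ v, d v * log (marg p g v.2) := by
    rw [sum_marg_mul_comp p _ Prod.snd (fun b => log (marg p g b))]
    simp only [mi, H2_eq_neg_sum_mul_log_div] at hmi
    field_simp at hmi
    linarith
  have hd_eq : ∀ v, 0 < d v → d v = marg p g v.2 := fun v =>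
    eq_of_sum_mul_log_eq_of_le (marg_nonneg hp _) hd_snd hlog
  by_contra hne
  have hpos : 0 < d (f ω', g ω') := hω'.trans_le (le_marg_apply hp _ ω')
  have h₁ : d (f ω, g ω') = marg p g (g ω') :=
    hg ▸ hd_eq (f ω, g ω) (hω.trans_le (le_marg_apply hp _ ω))
  have h₂ : d (f ω', g ω') = marg p g (g ω') := hd_eq _ hpos
  linarith [marg_pair_add_marg_pair_le hp f g hne (g ω')]

end MutualInformation

section BinaryWords

variable {ι : Type*} [Fintype ι]

theorem hammingDist_add_hammingDist_add_hammingDist_le (x y z : ι → ZMod 2) :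
    hammingDist x y + hammingDist y z + hammingDist x z ≤ 2 * Fintype.card ι := by
  classical
  simp only [hammingDist, card_filter, ← sum_add_distrib]
  calc _ ≤ ∑ _i : ι, 2 := sum_le_sum fun i _ => ?_
    _ = _ := by simp [mul_comm]
  -- among three bits, at most two of the three pairs differ
  generalize x i = a, y i = b, z i = c
  revert a b c
  decide

theorem card_le_hammingDist_add_one {β : Type*} [DecidableEq β] {x y : ι → β}
    (h : ∀ k l, x k = y k → x l = y l → k = l) : Fintype.card ι ≤ hammingDist x y + 1 := by
  classical
  have hagree : #{i | x i = y i} ≤ 1 :=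
    card_le_one.2 fun k hk l hl => h k l (mem_filter.1 hk).2 (mem_filter.1 hl).2
  have := card_filter_add_card_filter_not (s := univ) (fun i => x i = y i)
  simp only [hammingDist, card_univ, ne_eq] at this ⊢
  omega

end BinaryWords

section Channel

variable {m : ℕ} {Y : Type*} {W : (Fin m → ZMod 2) → Y → ℝ}

lemma inputJoint_pos_iff (x : Fin m → ZMod 2) (y : Y) : 0 < inputJoint W (x, y) ↔ 0 < W x y :=
  div_pos_iff_of_pos_right (by positivity)

variable [Fintype Y]

lemma IsChannel.exists_pos {α : Type*} {V : α → Y → ℝ} (hV : IsChannel V) (x : α) :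
    ∃ y, 0 < V x y := by
  obtain ⟨y, -, hy⟩ := exists_lt_of_sum_lt (s := univ) (f := 0) (g := V x) (by simp [hV.2 x])
  exact ⟨y, hy⟩

lemma inputJoint_nonneg (hW : IsChannel W) (v : (Fin m → ZMod 2) × Y) : 0 ≤ inputJoint W v :=
  div_nonneg (hW.1 v.1 v.2) (by positivity)

lemma sum_inputJoint (hW : IsChannel W) : ∑ v, inputJoint W v = 1 := by
  simp only [inputJoint, Fintype.sum_prod_type, ← sum_div, hW.2, sum_const, card_univ,
    Fintype.card_fun, ZMod.card, Fintype.card_fin, nsmul_eq_mul]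
  push_cast
  field_simp

lemma marg_inputJoint_restrict (hW : IsChannel W) (J : Finset (Fin m))
    (a : {i // i ∈ J} → ZMod 2) :
    marg (inputJoint W) (fun q => fun i : {i // i ∈ J} => q.1 i.1) a =
      Fintype.card ({i // i ∉ J} → ZMod 2) / 2 ^ m := by
  classical
  rw [marg, Fintype.sum_prod_type]
  calc _ = ∑ x : Fin m → ZMod 2,
        if (fun i : {i // i ∈ J} => x i.1) = a then (1 / 2 ^ m : ℝ) else 0 := by
        refine sum_congr rfl fun x _ => ?_
        by_cases hx : (fun i : {i // i ∈ J} => x i.1) = a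
        · simp [hx, inputJoint, ← sum_div, hW.2 x]
        · simp [hx]
    _ = _ := by
        rw [Fintype.sum_equiv (Equiv.piEquivPiSubtypeProd (· ∈ J) fun _ => ZMod 2)
          (fun x => if (fun i : {i // i ∈ J} => x i.1) = a then (1 / 2 ^ m : ℝ) else 0)
          (fun uv => if uv.1 = a then (1 / 2 ^ m : ℝ) else 0) (fun x => rfl)]
        simp [Fintype.sum_prod_type_right, div_eq_mul_inv]

lemma H2_marg_inputJoint_restrict (hW : IsChannel W) (J : Finset (Fin m)) :
    H2 (marg (inputJoint W) (fun q => fun i : {i // i ∈ J} => q.1 i.1)) = J.card := by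
  rw [H2_eq_logb_card (marg_inputJoint_restrict hW J) (by rw [sum_marg, sum_inputJoint hW])]
  simp [ZMod.card, logb_pow]

theorem exists_pos_of_miY_eq_zero (hW : IsChannel W) {J : Finset (Fin m)} (hJ : miY W J = 0)
    {x₀ : Fin m → ZMod 2} {y : Y} (hy : 0 < W x₀ y) (a : Fin m → ZMod 2) :
    ∃ x, (∀ i ∈ J, x i = a i) ∧ 0 < W x y := by
  have hpos : 0 < marg (inputJoint W) (fun q => ((fun i : {i // i ∈ J} => q.1 i.1), q.2))
      ((fun i : {i // i ∈ J} => a i.1), y) := by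
    rw [marg_pair_eq_mul_of_mi_eq_zero (inputJoint_nonneg hW) (sum_inputJoint hW) _ _ hJ,
      marg_inputJoint_restrict hW]
    exact mul_pos (by positivity) (((inputJoint_pos_iff x₀ y).2 hy).trans_le
      (le_marg_apply (inputJoint_nonneg hW) _ (x₀, y)))
  obtain ⟨⟨x, y'⟩, hxy, hxy_pos⟩ := exists_pos_of_marg_pos hpos
  simp only [Prod.mk.injEq] at hxy
  obtain ⟨hx, rfl⟩ := hxy
  exact ⟨x, fun i hi => congrFun hx ⟨i, hi⟩, (inputJoint_pos_iff x y').1 hxy_pos⟩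

theorem eq_of_condMI_eq_card (hW : IsChannel W) {J : Finset (Fin m)} (hJ : condMI W J = J.card)
    {x x' : Fin m → ZMod 2} {y : Y} (hx : 0 < W x y) (hx' : 0 < W x' y)
    (hxx' : ∀ i ∉ J, x i = x' i) : x = x' := by
  have hJ_eq : (fun i : {i // i ∈ J} => x i.1) = fun i => x' i.1 :=
    eq_of_mi_eq_H2 (inputJoint_nonneg hW) _ _ (hJ.trans (H2_marg_inputJoint_restrict hW J).symm)
      ((inputJoint_pos_iff x y).2 hx) ((inputJoint_pos_iff x' y).2 hx')
      (by simp only [Prod.mk.injEq, true_and]; exact funext fun i => hxx' i.1 (mem_compl.1 i.2))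
  funext i
  by_cases hi : i ∈ J
  · exact congrFun hJ_eq ⟨i, hi⟩
  · exact hxx' i hi

theorem card_le_hammingDist_add_one_of_condMI (hW : IsChannel W)
    (hcond : ∀ k l : Fin m, k ≠ l → condMI W {k, l}ᶜ = (({k, l}ᶜ : Finset (Fin m)).card : ℝ))
    {x x' : Fin m → ZMod 2} {y : Y} (hx : 0 < W x y) (hx' : 0 < W x' y) (hne : x ≠ x') :
    m ≤ hammingDist x x' + 1 := by
  simpa using card_le_hammingDist_add_one (x := x) (y := x') fun k l hk hl => by
    by_contra hkl
    refine hne (eq_of_condMI_eq_card hW (hcond k l hkl) hx hx' fun z hz => ?_)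
    rcases mem_insert.1 (notMem_compl.1 hz) with rfl | hz
    · exact hk
    · rwa [mem_singleton.1 hz]

end Channel

lemma Fin.exists_compl_pair_eq_pair {k l : Fin 4} (hkl : k ≠ l) :
    ∃ i j, i ≠ j ∧ i ≠ k ∧ i ≠ l ∧ j ≠ k ∧ j ≠ l ∧ ({k, l}ᶜ : Finset (Fin 4)) = {i, j} := by
  revert k l
  decide

theorem statement8 (Y : Type) [Fintype Y] (W : (Fin 4 → ZMod 2) → Y → ℝ)
    (hW : IsChannel W) :
    ¬ (∀ i j k l : Fin 4, i ≠ j → i ≠ k → i ≠ l → j ≠ k → j ≠ l → k ≠ l →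
        miY W {i, j} = 0 ∧ condMI W {i, j} = 2) := by
  intro h
  obtain ⟨y, hy⟩ := hW.exists_pos 0
  have hsurj := exists_pos_of_miY_eq_zero hW
    (h 0 1 2 3 (by decide) (by decide) (by decide) (by decide) (by decide) (by decide)).1 hy
  have hcond : ∀ k l : Fin 4, k ≠ l →
      condMI W {k, l}ᶜ = (({k, l}ᶜ : Finset (Fin 4)).card : ℝ) := by
    intro k l hkl
    obtain ⟨i, j, hij, hik, hil, hjk, hjl, hkl_compl⟩ := Fin.exists_compl_pair_eq_pair hkl
    rw [hkl_compl, (h i j k l hij hik hil hjk hjl hkl).2, card_pair hij]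
    norm_num
  obtain ⟨x₀, h₀, hx₀⟩ := hsurj ![0, 0, 0, 0]
  obtain ⟨x₁, h₁, hx₁⟩ := hsurj ![0, 1, 0, 0]
  obtain ⟨x₂, h₂, hx₂⟩ := hsurj ![1, 0, 0, 0]
  have h₀₁ : x₀ ≠ x₁ := fun he => absurd (congrFun he 1) (by
    rw [h₀ 1 (by decide), h₁ 1 (by decide)]; decide)
  have h₁₂ : x₁ ≠ x₂ := fun he => absurd (congrFun he 0) (by
    rw [h₁ 0 (by decide), h₂ 0 (by decide)]; decide)
  have h₀₂ : x₀ ≠ x₂ := fun he => absurd (congrFun he 0) (by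
    rw [h₀ 0 (by decide), h₂ 0 (by decide)]; decide)
  have := hammingDist_add_hammingDist_add_hammingDist_le x₀ x₁ x₂
  have := card_le_hammingDist_add_one_of_condMI hW hcond hx₀ hx₁ h₀₁
  have := card_le_hammingDist_add_one_of_condMI hW hcond hx₁ hx₂ h₁₂
  have := card_le_hammingDist_add_one_of_condMI hW hcond hx₀ hx₂ h₀₂
  simp only [Fintype.card_fin] at *
  omega
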